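/- arXiv:1809.10925 — 2 statements merged into one kernel-verified Lean document; each statement's English description precedes it below -/
import Mathlib

section
/- Let P be the uniform distribution on the closed unit disc in ℝ². Then HD(x;P) = 1/2 − (1/π)(arcsin(‖x‖) + ‖x‖√(1−‖x‖²)) for ‖x‖ ≤ 1, and HD(x;P) = 0 for ‖x‖ > 1. -/
/-!
Halfspace depth only needs the mass of halfspaces, and the uniform measure on the disc gives the
same mass to `{z | ⟪z, u⟫ ≤ α}` for every unit `u` (a reflection exchanges any two of them).
Hence among the halfspaces containing `x` the smallest is the one with level `-‖x‖`, whose normal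
points away from `x`. Its mass is the area of a circular segment, computed by slicing:
`∫_{-1}^{-r} 2√(1 - s²) ds = π/2 - arcsin r - r√(1 - r²)` with `r = ‖x‖`.
-/

open MeasureTheory
open scoped ENNReal RealInnerProductSpace

/-- The closed halfspace `{z : ⟪z, u⟫ ≤ α}` in `ℝ^d`. -/
def hsp (d : ℕ) (u : EuclideanSpace ℝ (Fin d)) (α : ℝ) :
    Set (EuclideanSpace ℝ (Fin d)) := {z | ⟪z, u⟫ ≤ α}

/-- The halfspace depth of `x` with respect to `P`. -/
noncomputable def HD {d : ℕ} (P : Measure (EuclideanSpace ℝ (Fin d)))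
    (x : EuclideanSpace ℝ (Fin d)) : ℝ≥0∞ :=
  ⨅ (u : EuclideanSpace ℝ (Fin d)) (_ : u ≠ 0) (α : ℝ) (_ : x ∈ hsp d u α),
    P (hsp d u α)

open Real Set Metric

section Halfspace

variable {d : ℕ}

lemma measurableSet_hsp (u : EuclideanSpace ℝ (Fin d)) (α : ℝ) : MeasurableSet (hsp d u α) :=
  (isClosed_le (continuous_id.inner continuous_const) continuous_const).measurableSet

lemma hsp_mono (u : EuclideanSpace ℝ (Fin d)) {α β : ℝ} (h : α ≤ β) : hsp d u α ⊆ hsp d u β :=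
  fun _ hz => le_trans hz h

lemma hsp_smul {c : ℝ} (hc : 0 < c) (u : EuclideanSpace ℝ (Fin d)) (α : ℝ) :
    hsp d (c • u) (c * α) = hsp d u α := by
  ext z
  simp only [hsp, mem_ofPred_eq, real_inner_smul_right]
  exact mul_le_mul_iff_right₀ hc

lemma preimage_hsp_linearIsometryEquiv
    (L : EuclideanSpace ℝ (Fin d) ≃ₗᵢ[ℝ] EuclideanSpace ℝ (Fin d))
    (u : EuclideanSpace ℝ (Fin d)) (α : ℝ) : L ⁻¹' hsp d (L u) α = hsp d u α := by
  ext z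
  simp only [hsp, mem_preimage, mem_ofPred_eq, LinearIsometryEquiv.inner_map_map]

/-- The reflection in `(u - v)ᗮ` maps `u` to `v` and preserves volume and balls about `0`. -/
lemma volume_hsp_inter_closedBall_of_norm_eq {u v : EuclideanSpace ℝ (Fin d)} (huv : ‖u‖ = ‖v‖)
    (α r : ℝ) :
    volume (hsp d u α ∩ closedBall 0 r) = volume (hsp d v α ∩ closedBall 0 r) := by
  set R := (ℝ ∙ (u - v))ᗮ.reflection
  have hRu : R u = v := Submodule.reflection_sub huv
  have hpre : R ⁻¹' (hsp d v α ∩ closedBall 0 r) = hsp d u α ∩ closedBall 0 r := by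
    rw [preimage_inter, ← hRu, preimage_hsp_linearIsometryEquiv]
    ext z
    simp
  rw [← hpre, R.measurePreserving.measure_preimage
    ((measurableSet_hsp v α).inter measurableSet_closedBall).nullMeasurableSet]

lemma exists_norm_eq_one_inner_eq_neg_norm {v : EuclideanSpace ℝ (Fin d)} (hv : ‖v‖ = 1)
    (x : EuclideanSpace ℝ (Fin d)) : ∃ u, ‖u‖ = 1 ∧ ⟪x, u⟫ = -‖x‖ := by
  rcases eq_or_ne x 0 with rfl | hx
  · exact ⟨v, hv, by simp⟩
  · have hx' : ‖x‖ ≠ 0 := norm_ne_zero_iff.2 hx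
    refine ⟨-(‖x‖⁻¹ • x), ?_, ?_⟩
    · rw [norm_neg, norm_smul, norm_inv, norm_norm, inv_mul_cancel₀ hx']
    · rw [inner_neg_right, real_inner_smul_right, real_inner_self_eq_norm_sq]
      field_simp

theorem HD_eq_measure_hsp_neg_norm {P : Measure (EuclideanSpace ℝ (Fin d))}
    (hP : ∀ u v α, ‖u‖ = ‖v‖ → P (hsp d u α) = P (hsp d v α))
    {v : EuclideanSpace ℝ (Fin d)} (hv : ‖v‖ = 1) (x : EuclideanSpace ℝ (Fin d)) :
    HD P x = P (hsp d v (-‖x‖)) := by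
  apply le_antisymm
  · obtain ⟨u, hu, hxu⟩ := exists_norm_eq_one_inner_eq_neg_norm hv x
    have hu0 : u ≠ 0 := norm_ne_zero_iff.1 (by rw [hu]; exact one_ne_zero)
    exact iInf₂_le_of_le u hu0 <| iInf₂_le_of_le (-‖x‖) hxu.le (hP u v _ (hu.trans hv.symm)).le
  · refine le_iInf₂ fun u hu => le_iInf₂ fun α hxα => ?_
    have hu' : 0 < ‖u‖⁻¹ := inv_pos.2 (norm_pos_iff.2 hu)
    have hnorm : ‖‖u‖⁻¹ • u‖ = ‖v‖ := by
      rw [hv, norm_smul, norm_inv, norm_norm, inv_mul_cancel₀ (norm_ne_zero_iff.2 hu)]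
    have hlevel : -‖x‖ ≤ ‖u‖⁻¹ * α := by
      rw [le_inv_mul_iff₀' (norm_pos_iff.2 hu), neg_mul]
      exact (neg_le_of_abs_le (abs_real_inner_le_norm x u)).trans hxα
    rw [← hsp_smul hu' u α, hP _ v _ hnorm]
    exact measure_mono (hsp_mono v hlevel)

end Halfspace

noncomputable def circularSegmentArea (t : ℝ) : ℝ := π / 2 + arcsin t + t * √(1 - t ^ 2)

lemma continuous_circularSegmentArea : Continuous circularSegmentArea := by
  unfold circularSegmentArea
  fun_prop

lemma circularSegmentArea_neg_one : circularSegmentArea (-1) = 0 := by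
  simp [circularSegmentArea]

lemma hasDerivAt_circularSegmentArea {t : ℝ} (ht : t ∈ Ioo (-1 : ℝ) 1) :
    HasDerivAt circularSegmentArea (2 * √(1 - t ^ 2)) t := by
  have hpos : 0 < 1 - t ^ 2 := by nlinarith [ht.1, ht.2]
  have hsqrt : HasDerivAt (fun s : ℝ => √(1 - s ^ 2)) (-(2 * t) / (2 * √(1 - t ^ 2))) t := by
    simpa using ((hasDerivAt_pow 2 t).const_sub 1).sqrt hpos.ne'
  have h : HasDerivAt circularSegmentArea
      (1 / √(1 - t ^ 2) + (1 * √(1 - t ^ 2) + t * (-(2 * t) / (2 * √(1 - t ^ 2))))) t :=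
    ((hasDerivAt_arcsin ht.1.ne' ht.2.ne).const_add (π / 2)).add ((hasDerivAt_id' t).mul hsqrt)
  refine h.congr_deriv ?_
  have hs : √(1 - t ^ 2) ^ 2 = 1 - t ^ 2 := sq_sqrt hpos.le
  have hs0 : √(1 - t ^ 2) ≠ 0 := (sqrt_pos.2 hpos).ne'
  field_simp
  linarith

lemma integral_two_mul_sqrt_one_sub_sq {t : ℝ} (ht₁ : -1 ≤ t) (ht₂ : t ≤ 1) :
    ∫ x in (-1)..t, 2 * √(1 - x ^ 2) = circularSegmentArea t := by
  rw [intervalIntegral.integral_eq_sub_of_hasDerivAt_of_le ht₁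
    continuous_circularSegmentArea.continuousOn
    (fun x hx => hasDerivAt_circularSegmentArea ⟨hx.1, hx.2.trans_le ht₂⟩)
    ((by fun_prop : Continuous fun x : ℝ => 2 * √(1 - x ^ 2)).intervalIntegrable _ _),
    circularSegmentArea_neg_one, sub_zero]

def circularSegment (t : ℝ) : Set (ℝ × ℝ) := {p | p.1 ≤ t ∧ p.1 ^ 2 + p.2 ^ 2 ≤ 1}

lemma measurableSet_circularSegment (t : ℝ) : MeasurableSet (circularSegment t) :=
  (measurableSet_le measurable_fst measurable_const).inter
    (measurableSet_le ((measurable_fst.pow_const 2).add (measurable_snd.pow_const 2))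
      measurable_const)

lemma volume_circularSegment {t : ℝ} (ht₁ : -1 ≤ t) (ht₂ : t ≤ 1) :
    volume (circularSegment t) = ENNReal.ofReal (circularSegmentArea t) := by
  set A := circularSegment t
  have hslice : ∀ x, volume (Prod.mk x ⁻¹' A) =
      (Icc (-1) t).indicator (fun x => ENNReal.ofReal (2 * √(1 - x ^ 2))) x := by
    intro x
    by_cases hx : x ∈ Icc (-1) t
    · have hx2 : 0 ≤ 1 - x ^ 2 := by nlinarith [hx.1, hx.2]
      have : Prod.mk x ⁻¹' A = Icc (-√(1 - x ^ 2)) √(1 - x ^ 2) := by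
        ext y
        rw [mem_Icc, ← Real.sq_le hx2]
        simp only [A, circularSegment, mem_preimage, mem_ofPred_eq, hx.2, true_and]
        constructor <;> intro h <;> linarith
      rw [indicator_of_mem hx, this, Real.volume_Icc, sub_neg_eq_add, two_mul]
    · have : Prod.mk x ⁻¹' A = ∅ := by
        ext y
        simp only [A, circularSegment, mem_preimage, mem_ofPred_eq, mem_empty_iff_false,
          iff_false, not_and]
        intro hxt
        have : x < -1 := by by_contra h; exact hx ⟨not_lt.1 h, hxt⟩
        nlinarith [sq_nonneg y]
      rw [indicator_of_notMem hx, this, measure_empty]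
  rw [Measure.volume_eq_prod, Measure.prod_apply (measurableSet_circularSegment t),
    lintegral_congr hslice, lintegral_indicator measurableSet_Icc,
    ← ofReal_integral_eq_lintegral_ofReal
      ((by fun_prop : Continuous fun x : ℝ => 2 * √(1 - x ^ 2)).integrableOn_Icc)
      (ae_of_all _ fun x => by positivity),
    integral_Icc_eq_integral_Ioc, ← intervalIntegral.integral_of_le ht₁,
    integral_two_mul_sqrt_one_sub_sq ht₁ ht₂]

lemma volume_hsp_single_inter_closedBall {t : ℝ} (ht₁ : -1 ≤ t) (ht₂ : t ≤ 1) :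
    volume (hsp 2 (EuclideanSpace.single 0 1) t ∩ closedBall 0 1) =
      ENNReal.ofReal (circularSegmentArea t) := by
  have hmp := (volume_preserving_finTwoArrow ℝ).comp
    (EuclideanSpace.volume_preserving_symm_measurableEquiv_toLp (Fin 2))
  have hset : hsp 2 (EuclideanSpace.single 0 1) t ∩ closedBall 0 1 =
      (MeasurableEquiv.finTwoArrow ∘ (MeasurableEquiv.toLp 2 (Fin 2 → ℝ)).symm) ⁻¹'
        circularSegment t := by
    ext z
    have hnorm : ‖z‖ ^ 2 = z 0 ^ 2 + z 1 ^ 2 := by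
      simp [EuclideanSpace.norm_sq_eq, Fin.sum_univ_two]
    simp only [hsp, circularSegment, mem_inter_iff, mem_ofPred_eq, mem_closedBall_zero_iff,
      mem_preimage, EuclideanSpace.inner_single_right, one_mul, conj_trivial]
    change _ ↔ z 0 ≤ t ∧ z 0 ^ 2 + z 1 ^ 2 ≤ 1
    rw [← hnorm, sq_le_one_iff₀ (norm_nonneg z)]
  rw [hset, hmp.measure_preimage (measurableSet_circularSegment t).nullMeasurableSet,
    volume_circularSegment ht₁ ht₂]

/-- The halfspace depth of the uniform distribution on the closed unit disc in `ℝ²`. -/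
theorem halfspace_depth_unit_disc
    (P : Measure (EuclideanSpace ℝ (Fin 2)))
    (hP : P = (ENNReal.ofReal Real.pi)⁻¹ •
      volume.restrict (Metric.closedBall (0 : EuclideanSpace ℝ (Fin 2)) 1)) :
    (∀ x : EuclideanSpace ℝ (Fin 2), ‖x‖ ≤ 1 →
      HD P x = ENNReal.ofReal
        (1 / 2 - (1 / Real.pi) *
          (Real.arcsin ‖x‖ + ‖x‖ * Real.sqrt (1 - ‖x‖ ^ 2)))) ∧
    (∀ x : EuclideanSpace ℝ (Fin 2), 1 < ‖x‖ → HD P x = 0) := by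
  set e : EuclideanSpace ℝ (Fin 2) := EuclideanSpace.single 0 1
  have he : ‖e‖ = 1 := by simp [e]
  have hP_hsp : ∀ u α,
      P (hsp 2 u α) = (ENNReal.ofReal π)⁻¹ * volume (hsp 2 u α ∩ closedBall 0 1) := fun u α => by
    rw [hP, Measure.smul_apply, Measure.restrict_apply (measurableSet_hsp u α), smul_eq_mul]
  have hinv : ∀ u v α, ‖u‖ = ‖v‖ → P (hsp 2 u α) = P (hsp 2 v α) := fun u v α huv => by
    rw [hP_hsp, hP_hsp, volume_hsp_inter_closedBall_of_norm_eq huv]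
  have hseg : ∀ t, -1 ≤ t → t ≤ 1 → P (hsp 2 e t) = ENNReal.ofReal (circularSegmentArea t / π) :=
    fun t ht₁ ht₂ => by
      rw [hP_hsp, volume_hsp_single_inter_closedBall ht₁ ht₂, ENNReal.ofReal_div_of_pos pi_pos,
        ENNReal.div_eq_inv_mul]
  refine ⟨fun x hx => ?_, fun x hx => ?_⟩
  · rw [HD_eq_measure_hsp_neg_norm hinv he, hseg _ (by linarith) (by linarith [norm_nonneg x])]
    congr 1
    simp only [circularSegmentArea, arcsin_neg, neg_sq]
    field_simp
    ring
  · rw [HD_eq_measure_hsp_neg_norm hinv he]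
    refine measure_mono_null (hsp_mono e (neg_le_neg hx.le)) ?_
    rw [hseg (-1) le_rfl (by norm_num), circularSegmentArea_neg_one, zero_div, ENNReal.ofReal_zero]
end

section
/- Let P be a probability measure on ℝ^d with characteristic function ψ(t) = φ(‖t‖_α) for some continuous φ and some α ∈ (1,2] (an α-symmetric distribution), and let F₁ denote the distribution function of the first coordinate X₁. Then for all x ∈ ℝ^d, HD(x;P) = F₁(−‖x‖_{α*}), where α* = α/(α−1) and ‖x‖_p = (Σ|x_i|^p)^{1/p}. In particular the depth regions { y : HD(y;P) ≥ δ } are balls of the ℓ^{α*} norm centered at the origin. -/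
open MeasureTheory
open scoped ENNReal RealInnerProductSpace

/-! By `α`-symmetry the halfspace `{⟪z, u⟫ ≤ a}` has probability `F₁(a / ‖u‖_α)`, so with `F₁`
monotone the depth of `x` is `F₁` at `inf_{u ≠ 0} ⟪x, u⟫ / ‖u‖_α`, which is `-‖x‖_{α*}` by Hölder's
inequality and its equality case. As `F₁` is right-continuous and vanishes at `-∞`, every level
set `{t | δ ≤ F₁(-t)}` with `δ > 0` is a half-line `t ≤ r`, so the depth regions are
`ℓ^{α*}`-balls. -/

open Set Filter Topology ProbabilityTheory

section ellNorm

variable {ι : Type*} [Fintype ι]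

/-- The `ℓ^p` norm, spelled out rather than transported through `PiLp p`. -/
noncomputable def ellNorm (p : ℝ) (x : EuclideanSpace ℝ ι) : ℝ := (∑ i, |x i| ^ p) ^ (1 / p)

lemma ellNorm_nonneg (p : ℝ) (x : EuclideanSpace ℝ ι) : 0 ≤ ellNorm p x :=
  Real.rpow_nonneg (Finset.sum_nonneg fun _ _ => Real.rpow_nonneg (abs_nonneg _) _) _

lemma sum_abs_rpow_pos {x : EuclideanSpace ℝ ι} (hx : x ≠ 0) (p : ℝ) : 0 < ∑ i, |x i| ^ p := by
  obtain ⟨j, hj⟩ : ∃ j, x j ≠ 0 := by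
    by_contra! h
    exact hx (PiLp.ext h)
  exact Finset.sum_pos' (fun i _ => Real.rpow_nonneg (abs_nonneg _) _)
    ⟨j, Finset.mem_univ j, Real.rpow_pos_of_pos (abs_pos.2 hj) _⟩

lemma ellNorm_pos {x : EuclideanSpace ℝ ι} (hx : x ≠ 0) (p : ℝ) : 0 < ellNorm p x :=
  Real.rpow_pos_of_pos (sum_abs_rpow_pos hx p) _

lemma ellNorm_zero {p : ℝ} (hp : p ≠ 0) : ellNorm p (0 : EuclideanSpace ℝ ι) = 0 := by
  simp [ellNorm, Real.zero_rpow hp, Real.zero_rpow (inv_ne_zero hp)]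

lemma real_inner_eq_sum_mul (x u : EuclideanSpace ℝ ι) : ⟪x, u⟫ = ∑ i, x i * u i := by
  simp [PiLp.inner_apply, mul_comm]

lemma neg_mul_ellNorm_le_inner {p q : ℝ} (hpq : p.HolderConjugate q) (x u : EuclideanSpace ℝ ι) :
    -(ellNorm p x * ellNorm q u) ≤ ⟪x, u⟫ := by
  have h := Real.inner_le_Lp_mul_Lq Finset.univ (fun i => -x i) (fun i => u i) hpq
  simp only [abs_neg, neg_mul, Finset.sum_neg_distrib] at h
  rw [real_inner_eq_sum_mul]
  exact neg_le.1 h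

lemma mul_neg_mul_abs_rpow_sub_two {p : ℝ} (hp : p ≠ 0) (t : ℝ) :
    t * (-t * |t| ^ (p - 2)) = -|t| ^ p := by
  rcases eq_or_ne t 0 with rfl | ht
  · simp [Real.zero_rpow hp]
  · rw [neg_mul, mul_neg, ← mul_assoc, ← abs_mul_abs_self, ← sq, ← Real.rpow_natCast,
      ← Real.rpow_add (abs_pos.2 ht)]
    norm_num

lemma abs_neg_mul_abs_rpow_sub_two_rpow {p q : ℝ} (hpq : p.HolderConjugate q) (t : ℝ) :
    |-t * |t| ^ (p - 2)| ^ q = |t| ^ p := by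
  rcases eq_or_ne t 0 with rfl | ht
  · simp [Real.zero_rpow hpq.ne_zero, Real.zero_rpow hpq.symm.ne_zero]
  · have hpow : |-t * |t| ^ (p - 2)| = |t| ^ (p - 1) := by
      rw [abs_mul, abs_neg, abs_of_nonneg (Real.rpow_nonneg (abs_nonneg t) _),
        ← Real.rpow_one_add' (abs_nonneg t) (by linarith [hpq.lt])]
      ring_nf
    rw [hpow, ← Real.rpow_mul (abs_nonneg t), hpq.sub_one_mul_conj]

/-- Equality in Hölder's inequality, attained at `uᵢ = -xᵢ |xᵢ|^(p-2)` when `x ≠ 0`. -/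
lemma exists_inner_eq_neg_mul_ellNorm [Nonempty ι] {p q : ℝ} (hpq : p.HolderConjugate q)
    (x : EuclideanSpace ℝ ι) : ∃ u ≠ 0, ⟪x, u⟫ = -(ellNorm p x * ellNorm q u) := by
  rcases eq_or_ne x 0 with rfl | hx
  · classical
    obtain ⟨i⟩ := ‹Nonempty ι›
    refine ⟨EuclideanSpace.single i 1, by simp, ?_⟩
    simp [ellNorm_zero hpq.ne_zero]
  set u : EuclideanSpace ℝ ι := WithLp.toLp 2 fun i => -x i * |x i| ^ (p - 2)
  set S := ∑ i, |x i| ^ p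
  have hS : 0 < S := sum_abs_rpow_pos hx p
  have hinner : ⟪x, u⟫ = -S := by
    simp only [real_inner_eq_sum_mul, u, mul_neg_mul_abs_rpow_sub_two hpq.ne_zero,
      Finset.sum_neg_distrib, S]
  have hu : ellNorm q u = S ^ (1 / q) := by
    simp only [ellNorm, u, abs_neg_mul_abs_rpow_sub_two_rpow hpq, S]
  refine ⟨u, fun h0 => ?_, ?_⟩
  · rw [h0, inner_zero_right] at hinner
    linarith
  · rw [hinner, hu, ellNorm, ← Real.rpow_add hS, one_div, one_div, hpq.inv_add_inv_eq_one,
      Real.rpow_one]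

end ellNorm

section depth

variable {d : ℕ} {P : Measure (EuclideanSpace ℝ (Fin d))}

lemma HD_le_measure_hsp {x u : EuclideanSpace ℝ (Fin d)} (hu : u ≠ 0) {a : ℝ}
    (hx : x ∈ hsp d u a) : HD P x ≤ P (hsp d u a) :=
  iInf_le_of_le u <| iInf_le_of_le hu <| iInf_le_of_le a <| iInf_le _ hx

lemma le_HD {x : EuclideanSpace ℝ (Fin d)} {m : ℝ≥0∞}
    (h : ∀ u ≠ 0, ∀ a, ⟪x, u⟫ ≤ a → m ≤ P (hsp d u a)) : m ≤ HD P x :=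
  le_iInf fun u => le_iInf fun hu => le_iInf fun a => le_iInf fun hx => h u hu a hx

lemma HD_eq_of_measure_hsp_eq {G : ℝ → ℝ≥0∞} (hG : Monotone G)
    {c N : EuclideanSpace ℝ (Fin d) → ℝ} (hc : ∀ u ≠ 0, 0 < c u)
    (hP : ∀ u ≠ 0, ∀ a, P (hsp d u a) = G (a / c u))
    (hdual : ∀ x u, -(N x * c u) ≤ ⟪x, u⟫)
    (hattained : ∀ x, ∃ u ≠ 0, ⟪x, u⟫ = -(N x * c u)) (x : EuclideanSpace ℝ (Fin d)) :
    HD P x = G (-N x) := by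
  apply le_antisymm
  · obtain ⟨u, hu, hxu⟩ := hattained x
    calc HD P x ≤ P (hsp d u ⟪x, u⟫) := HD_le_measure_hsp hu (le_rfl : ⟪x, u⟫ ≤ _)
      _ = G (-N x) := by rw [hP u hu, hxu, neg_div, mul_div_cancel_right₀ _ (hc u hu).ne']
  · refine le_HD fun u hu a ha => ?_
    rw [hP u hu]
    exact hG <| (le_div_iff₀ (hc u hu)).2 <| by linarith [hdual x u]

end depth

lemma measure_setOf_le_eq_of_map_eq {E : Type*} [MeasurableSpace E] {P : Measure E}
    {f g : E → ℝ} (hf : Measurable f) (hg : Measurable g) {c : ℝ} (hc : 0 < c)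
    (h : P.map f = P.map fun z => c * g z) (a : ℝ) :
    P {z | f z ≤ a} = P {z | g z ≤ a / c} := by
  calc P {z | f z ≤ a} = P.map f (Iic a) := (Measure.map_apply hf measurableSet_Iic).symm
    _ = P.map (fun z => c * g z) (Iic a) := by rw [h]
    _ = P {z | c * g z ≤ a} := Measure.map_apply (hg.const_mul c) measurableSet_Iic
    _ = P {z | g z ≤ a / c} := by simp_rw [le_div_iff₀' hc]

lemma Monotone.exists_setOf_le_eq_Ici {β : Type*} [LinearOrder β] [TopologicalSpace β]
    [OrderTopology β] {G : ℝ → β} (hG : Monotone G)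
    (hcont : ∀ s, ContinuousWithinAt G (Ici s) s) {b δ : β} (hlim : Tendsto G atBot (𝓝 b))
    (hbδ : b < δ) (hne : {s | δ ≤ G s}.Nonempty) : ∃ m, {s | δ ≤ G s} = Ici m := by
  set S := {s | δ ≤ G s}
  obtain ⟨b₀, hb₀⟩ := eventually_atBot.1 (hlim.eventually (gt_mem_nhds hbδ))
  have hbdd : BddBelow S := ⟨b₀, fun s hs => le_of_not_gt fun h => (hb₀ s h.le).not_ge hs⟩
  have hmem : sInf S ∈ S := by
    have hright : ∀ᶠ s in 𝓝[>] sInf S, δ ≤ G s := by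
      filter_upwards [self_mem_nhdsWithin] with s hs
      obtain ⟨s', hs'S, hs's⟩ := exists_lt_of_csInf_lt hne hs
      exact hs'S.trans (hG hs's.le)
    exact _root_.ge_of_tendsto ((hcont _).mono Ioi_subset_Ici_self) hright
  refine ⟨sInf S, Set.ext fun s => ⟨fun hs => csInf_le hbdd hs, fun hs => ?_⟩⟩
  exact (show δ ≤ G (sInf S) from hmem).trans (hG hs)

lemma Monotone.exists_setOf_le_comp_neg_eq {X β : Type*} [LinearOrder β] [TopologicalSpace β]
    [OrderTopology β] {G : ℝ → β} (hG : Monotone G)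
    (hcont : ∀ s, ContinuousWithinAt G (Ici s) s) {b δ : β} (hlim : Tendsto G atBot (𝓝 b))
    (hbδ : b < δ) {N : X → ℝ} (hN : ∀ y, 0 ≤ N y) :
    ∃ r, {y | δ ≤ G (-N y)} = {y | N y ≤ r} := by
  by_cases hne : {s | δ ≤ G s}.Nonempty
  · obtain ⟨m, hm⟩ := hG.exists_setOf_le_eq_Ici hcont hlim hbδ hne
    exact ⟨-m, Set.ext fun y => (Set.ext_iff.1 hm (-N y)).trans (mem_Ici.trans le_neg)⟩
  · refine ⟨-1, Set.ext fun y => iff_of_false (fun h => hne ⟨_, h⟩) fun (h : N y ≤ -1) => ?_⟩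
    linarith [hN y]

lemma continuousWithinAt_measure_Iic (μ : Measure ℝ) [IsProbabilityMeasure μ] (s : ℝ) :
    ContinuousWithinAt (fun t => μ (Iic t)) (Ici s) s := by
  simp_rw [← ofReal_cdf]
  exact ENNReal.continuous_ofReal.continuousAt.comp_continuousWithinAt
    ((cdf μ).right_continuous s)

lemma tendsto_measure_Iic_atBot (μ : Measure ℝ) [IsProbabilityMeasure μ] :
    Tendsto (fun t => μ (Iic t)) atBot (𝓝 0) := by
  simp_rw [← ofReal_cdf]
  have h := (ENNReal.continuous_ofReal.tendsto 0).comp (tendsto_cdf_atBot μ)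
  rwa [ENNReal.ofReal_zero] at h

theorem halfspace_depth_alpha_symmetric_general {d : ℕ} (hd : 0 < d)
    (P : Measure (EuclideanSpace ℝ (Fin d))) [IsProbabilityMeasure P]
    (α : ℝ) (hα1 : 1 < α)
    (hsym : ∀ u : EuclideanSpace ℝ (Fin d),
      Measure.map (fun z : EuclideanSpace ℝ (Fin d) => ⟪z, u⟫) P =
      Measure.map (fun z : EuclideanSpace ℝ (Fin d) =>
        (∑ i, |u i| ^ α) ^ (1 / α) * z ⟨0, hd⟩) P) :
    (∀ x : EuclideanSpace ℝ (Fin d),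
      HD P x = P {z : EuclideanSpace ℝ (Fin d) |
        z ⟨0, hd⟩ ≤ -((∑ i, |x i| ^ (α / (α - 1))) ^ (1 / (α / (α - 1))))}) ∧
    (∀ δ : ℝ≥0∞, 0 < δ → ∃ r : ℝ,
      {y : EuclideanSpace ℝ (Fin d) | δ ≤ HD P y} =
      {y : EuclideanSpace ℝ (Fin d) |
        (∑ i, |y i| ^ (α / (α - 1))) ^ (1 / (α / (α - 1))) ≤ r}) := by
  have : Nonempty (Fin d) := ⟨⟨0, hd⟩⟩
  have hpq : (α / (α - 1)).HolderConjugate α := (Real.HolderConjugate.conjExponent hα1).symm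
  have hcoord : Measurable fun z : EuclideanSpace ℝ (Fin d) => z ⟨0, hd⟩ :=
    (EuclideanSpace.proj (⟨0, hd⟩ : Fin d)).continuous.measurable
  set ν := P.map fun z : EuclideanSpace ℝ (Fin d) => z ⟨0, hd⟩
  have hν : IsProbabilityMeasure ν := Measure.isProbabilityMeasure_map hcoord.aemeasurable
  set G : ℝ → ℝ≥0∞ := fun s => P {z | z ⟨0, hd⟩ ≤ s}
  have hGν : G = fun s => ν (Iic s) :=
    funext fun s => (Measure.map_apply hcoord measurableSet_Iic).symm
  have hG : Monotone G := fun s t hst => measure_mono fun z hz => le_trans hz hst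
  have hhsp : ∀ u ≠ 0, ∀ a, P (hsp d u a) = G (a / ellNorm α u) := fun u hu a =>
    measure_setOf_le_eq_of_map_eq (continuous_id.inner continuous_const).measurable hcoord
      (ellNorm_pos hu α) (hsym u) a
  have hHD : ∀ x, HD P x = G (-ellNorm (α / (α - 1)) x) :=
    HD_eq_of_measure_hsp_eq hG (fun u hu => ellNorm_pos hu α) hhsp
      (neg_mul_ellNorm_le_inner hpq) (exists_inner_eq_neg_mul_ellNorm hpq)
  refine ⟨hHD, fun δ hδ => ?_⟩
  simp_rw [hHD, hGν]
  exact (hGν ▸ hG).exists_setOf_le_comp_neg_eq (continuousWithinAt_measure_Iic ν)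
    (tendsto_measure_Iic_atBot ν) hδ (ellNorm_nonneg _)

/-- For an `α`-symmetric distribution with `1 < α ≤ 2`, the halfspace depth is
`F₁(-‖x‖_{α*})` with `α* = α/(α-1)`, and every positive-level depth region is a ball
of the `ℓ^{α*}` norm centered at the origin. -/
theorem halfspace_depth_alpha_symmetric {d : ℕ} (hd : 0 < d)
    (P : Measure (EuclideanSpace ℝ (Fin d))) [IsProbabilityMeasure P]
    (α : ℝ) (hα1 : 1 < α) (hα2 : α ≤ 2)
    (hsym : ∀ u : EuclideanSpace ℝ (Fin d),
      Measure.map (fun z : EuclideanSpace ℝ (Fin d) => ⟪z, u⟫) P =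
      Measure.map (fun z : EuclideanSpace ℝ (Fin d) =>
        (∑ i, |u i| ^ α) ^ (1 / α) * z ⟨0, hd⟩) P) :
    (∀ x : EuclideanSpace ℝ (Fin d),
      HD P x = P {z : EuclideanSpace ℝ (Fin d) |
        z ⟨0, hd⟩ ≤ -((∑ i, |x i| ^ (α / (α - 1))) ^ (1 / (α / (α - 1))))}) ∧
    (∀ δ : ℝ≥0∞, 0 < δ → ∃ r : ℝ,
      {y : EuclideanSpace ℝ (Fin d) | δ ≤ HD P y} =
      {y : EuclideanSpace ℝ (Fin d) |
        (∑ i, |y i| ^ (α / (α - 1))) ^ (1 / (α / (α - 1))) ≤ r}) :=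
  halfspace_depth_alpha_symmetric_general hd P α hα1 hsym
end
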